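/- arXiv:math/0105015 — 7 statements merged into one kernel-verified Lean document; each statement's English description precedes it below -/
import Mathlib

section
/- An IP loop L is a RIF loop (every inner mapping θ satisfies (x⁻¹)θ = (xθ)⁻¹) if and only if L is flexible and satisfies R(x,y) = L(x⁻¹,y⁻¹) for all x, y, where R(x,y) = R(x)R(y)R(xy)⁻¹ and L(x,y) = L(x)L(y)L(yx)⁻¹. -/
/-- A loop: a magma with two-sided identity and left/right division. -/
class Loop (M : Type*) extends Mul M, One M where
  ld : M → M → M
  rd : M → M → M
  mul_ld : ∀ x y : M, x * ld x y = y
  ld_mul : ∀ x y : M, ld x (x * y) = y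
  rd_mul : ∀ x y : M, rd y x * x = y
  mul_rd : ∀ x y : M, rd (y * x) x = y
  one_mul : ∀ x : M, 1 * x = x
  mul_one : ∀ x : M, x * 1 = x

/-- An inverse property (IP) loop. -/
class IPLoop (M : Type*) extends Loop M, Inv M where
  inv_mul_cancel_left : ∀ x y : M, x⁻¹ * (x * y) = y
  mul_inv_cancel_right : ∀ x y : M, (y * x) * x⁻¹ = y

/-- Left translation `L(x) : y ↦ x * y` as a permutation. -/
def Loop.Lperm {M : Type*} [Loop M] (x : M) : Equiv.Perm M :=
  ⟨fun y => x * y, fun y => Loop.ld x y, Loop.ld_mul x, Loop.mul_ld x⟩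

/-- Right translation `R(x) : y ↦ y * x` as a permutation. -/
def Loop.Rperm {M : Type*} [Loop M] (x : M) : Equiv.Perm M :=
  ⟨fun y => y * x, fun y => Loop.rd y x, fun y => Loop.mul_rd x y, fun y => Loop.rd_mul x y⟩

/-- The multiplication group: the subgroup of permutations generated by all translations. -/
def Loop.Mlt (M : Type*) [Loop M] : Subgroup (Equiv.Perm M) :=
  Subgroup.closure (Set.range (Loop.Lperm (M := M)) ∪ Set.range (Loop.Rperm (M := M)))

/-!
The stabiliser of `1` in the multiplication group is generated by `T(x)`, `R(x,y)` and `L(x,y)`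
(a Schreier argument with the transversal `R(b)`), so a loop is RIF iff these generators commute
with the inversion map `J`. In an IP loop inversion is an anti-automorphism, hence conjugation by `J`
sends `R(x)` to `L(x⁻¹)` and `L(x)` to `R(x⁻¹)`. Thus `J R(x,y) J = L(x⁻¹,y⁻¹)` and
`J L(x,y) J = R(x⁻¹,y⁻¹)`, so the generators `R(x,y)`, `L(x,y)` commute with `J` exactly when
`R(x,y) = L(x⁻¹,y⁻¹)`, while `T(x)` commutes with `J` exactly when `x⁻¹(zx) = (x⁻¹z)x`, which in an
IP loop is flexibility.
-/

open Equiv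

namespace Loop

variable {M : Type*} [Loop M]

@[simp] theorem Lperm_apply (x z : M) : Lperm x z = x * z := rfl
@[simp] theorem Rperm_apply (x z : M) : Rperm x z = z * x := rfl
theorem Lperm_inv_apply (x z : M) : (Lperm x)⁻¹ z = ld x z := rfl
theorem Rperm_inv_apply (x z : M) : (Rperm x)⁻¹ z = rd z x := rfl

theorem ld_self (x : M) : ld x x = 1 := by
  simpa only [Loop.mul_one] using ld_mul x 1

theorem rd_self (x : M) : rd x x = 1 := by
  simpa only [Loop.one_mul] using mul_rd x 1

theorem Rperm_one : Rperm (1 : M) = 1 := Equiv.ext Loop.mul_one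

theorem Lperm_mem_Mlt (x : M) : Lperm x ∈ Mlt M := Subgroup.subset_closure (Or.inl ⟨x, rfl⟩)

theorem Rperm_mem_Mlt (x : M) : Rperm x ∈ Mlt M := Subgroup.subset_closure (Or.inr ⟨x, rfl⟩)

/- `Equiv.Perm` composes right to left while the paper applies maps on the right, so
`R(x,y) = R(x)R(y)R(xy)⁻¹` becomes `(Rperm (x * y))⁻¹ * Rperm y * Rperm x`. -/
def innerT (x : M) : Perm M := (Lperm x)⁻¹ * Rperm x

def innerR (x y : M) : Perm M := (Rperm (x * y))⁻¹ * Rperm y * Rperm x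

def innerL (x y : M) : Perm M := (Lperm (y * x))⁻¹ * Lperm y * Lperm x

@[simp] theorem innerT_apply (x z : M) : innerT x z = ld x (z * x) := rfl
@[simp] theorem innerR_apply (x y z : M) : innerR x y z = rd (z * x * y) (x * y) := rfl
@[simp] theorem innerL_apply (x y z : M) : innerL x y z = ld (y * x) (y * (x * z)) := rfl

def Inn (M : Type*) [Loop M] : Subgroup (Perm M) :=
  Subgroup.closure {θ | (∃ x, innerT x = θ) ∨ (∃ x y, innerR x y = θ) ∨ ∃ x y, innerL x y = θ}

theorem innerT_mem_Inn (x : M) : innerT x ∈ Inn M :=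
  Subgroup.subset_closure (Or.inl ⟨x, rfl⟩)

theorem innerR_mem_Inn (x y : M) : innerR x y ∈ Inn M :=
  Subgroup.subset_closure (Or.inr (Or.inl ⟨x, y, rfl⟩))

theorem innerL_mem_Inn (x y : M) : innerL x y ∈ Inn M :=
  Subgroup.subset_closure (Or.inr (Or.inr ⟨x, y, rfl⟩))

theorem Inn_le_Mlt : Inn M ≤ Mlt M := by
  have hL := Lperm_mem_Mlt (M := M)
  have hR := Rperm_mem_Mlt (M := M)
  refine Subgroup.closure_le _ |>.mpr ?_
  rintro _ (⟨x, rfl⟩ | ⟨x, y, rfl⟩ | ⟨x, y, rfl⟩)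
  · exact mul_mem (inv_mem (hL x)) (hR x)
  · exact mul_mem (mul_mem (inv_mem (hR _)) (hR y)) (hR x)
  · exact mul_mem (mul_mem (inv_mem (hL _)) (hL y)) (hL x)

theorem Inn_le_stabilizer : Inn M ≤ MulAction.stabilizer (Perm M) (1 : M) := by
  refine Subgroup.closure_le _ |>.mpr ?_
  rintro _ (⟨x, rfl⟩ | ⟨x, y, rfl⟩ | ⟨x, y, rfl⟩) <;>
    simp [Perm.smul_def, Loop.one_mul, Loop.mul_one, ld_self, rd_self]

theorem Rperm_inv_mul_Lperm_mul_Rperm (x b : M) :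
    (Rperm (x * b))⁻¹ * Lperm x * Rperm b = (innerT (x * b))⁻¹ * innerL b x * innerT b := by
  ext z
  simp only [innerT, mul_inv_rev, inv_inv, Perm.mul_apply, Lperm_apply, Rperm_apply,
    Lperm_inv_apply, Rperm_inv_apply, innerL_apply, mul_ld]

/- Schreier's lemma for the transversal `b ↦ R(b)`: the expression is multiplicative along
products in `θ`, so only the generators `L(x)`, `R(x)` need checking. -/
theorem Rperm_inv_mul_mul_Rperm_mem_Inn {θ : Perm M} (hθ : θ ∈ Mlt M) (b : M) :
    (Rperm (θ b))⁻¹ * θ * Rperm b ∈ Inn M := by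
  induction hθ using Subgroup.closure_induction generalizing b with
  | mem σ hσ =>
    rcases hσ with ⟨x, rfl⟩ | ⟨x, rfl⟩
    · rw [Lperm_apply, Rperm_inv_mul_Lperm_mul_Rperm]
      exact mul_mem (mul_mem (inv_mem (innerT_mem_Inn _)) (innerL_mem_Inn b x)) (innerT_mem_Inn b)
    · exact innerR_mem_Inn b x
  | one => simp
  | mul σ τ _ _ hσ hτ =>
    have key : (Rperm ((σ * τ) b))⁻¹ * (σ * τ) * Rperm b =
        ((Rperm (σ (τ b)))⁻¹ * σ * Rperm (τ b)) * ((Rperm (τ b))⁻¹ * τ * Rperm b) := by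
      rw [Perm.mul_apply]; group
    exact key ▸ mul_mem (hσ (τ b)) (hτ b)
  | inv σ _ hσ =>
    have key : (Rperm (σ⁻¹ b))⁻¹ * σ⁻¹ * Rperm b =
        ((Rperm (σ (σ⁻¹ b)))⁻¹ * σ * Rperm (σ⁻¹ b))⁻¹ := by
      rw [Perm.coe_inv, apply_symm_apply]; group
    exact key ▸ inv_mem (hσ _)

theorem mem_Inn_iff {θ : Perm M} : θ ∈ Inn M ↔ θ ∈ Mlt M ∧ θ 1 = 1 := by
  refine ⟨fun h => ⟨Inn_le_Mlt h, Inn_le_stabilizer h⟩, fun ⟨hθ, h1⟩ => ?_⟩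
  simpa [h1, Rperm_one] using Rperm_inv_mul_mul_Rperm_mem_Inn hθ 1

end Loop

namespace IPLoop

open Loop

variable {M : Type*} [IPLoop M]

theorem inv_mul_cancel (x : M) : x⁻¹ * x = 1 := by
  simpa only [Loop.mul_one] using IPLoop.inv_mul_cancel_left x (1 : M)

theorem inv_inv (x : M) : x⁻¹⁻¹ = x := by
  simpa only [IPLoop.inv_mul_cancel, Loop.mul_one] using IPLoop.inv_mul_cancel_left x⁻¹ x

theorem mul_inv_cancel_left (x y : M) : x * (x⁻¹ * y) = y := by
  simpa only [IPLoop.inv_inv] using IPLoop.inv_mul_cancel_left x⁻¹ y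

theorem inv_mul_cancel_right (x y : M) : y * x⁻¹ * x = y := by
  simpa only [IPLoop.inv_inv] using IPLoop.mul_inv_cancel_right x⁻¹ y

theorem ld_eq_inv_mul (x y : M) : ld x y = x⁻¹ * y := by
  rw [← mul_ld x y, IPLoop.inv_mul_cancel_left, mul_ld]

theorem rd_eq_mul_inv (x y : M) : rd y x = y * x⁻¹ := by
  rw [← rd_mul x y, IPLoop.mul_inv_cancel_right, rd_mul]

theorem mul_inv_rev (x y : M) : (x * y)⁻¹ = y⁻¹ * x⁻¹ := by
  calc (x * y)⁻¹ = y⁻¹ * (y * (x * y)⁻¹) := (IPLoop.inv_mul_cancel_left y _).symm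
    _ = y⁻¹ * (x⁻¹ * (x * y) * (x * y)⁻¹) := by rw [IPLoop.inv_mul_cancel_left x y]
    _ = y⁻¹ * x⁻¹ := by rw [IPLoop.mul_inv_cancel_right]

theorem flexible_iff :
    (∀ x y : M, x * (y * x) = x * y * x) ↔ ∀ x z : M, x⁻¹ * (z * x) = x⁻¹ * z * x := by
  refine ⟨fun h x z => ?_, fun h x y => ?_⟩
  · calc x⁻¹ * (z * x) = x⁻¹ * (x * (x⁻¹ * z) * x) := by rw [IPLoop.mul_inv_cancel_left]
      _ = x⁻¹ * z * x := by rw [← h, IPLoop.inv_mul_cancel_left]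
  · have hxy : x * y = x * (y * x) * x⁻¹ := by
      simpa only [IPLoop.inv_inv, IPLoop.mul_inv_cancel_right] using h x⁻¹ (y * x)
    rw [hxy, IPLoop.inv_mul_cancel_right]

def invPerm (M : Type*) [IPLoop M] : Perm M := Function.Involutive.toPerm _ IPLoop.inv_inv

@[simp] theorem invPerm_apply (x : M) : invPerm M x = x⁻¹ := rfl

@[simp] theorem invPerm_inv : (invPerm M)⁻¹ = invPerm M := rfl

theorem mem_centralizer_invPerm_iff {θ : Perm M} :
    θ ∈ Subgroup.centralizer {invPerm M} ↔ ∀ x, θ x⁻¹ = (θ x)⁻¹ := by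
  simp only [Subgroup.mem_centralizer_singleton_iff, Equiv.ext_iff, Perm.mul_apply,
    invPerm_apply]

theorem mem_centralizer_invPerm_iff_conj {θ : Perm M} :
    θ ∈ Subgroup.centralizer {invPerm M} ↔ MulAut.conj (invPerm M) θ = θ := by
  rw [Subgroup.mem_centralizer_singleton_iff, MulAut.conj_apply, mul_inv_eq_iff_eq_mul, eq_comm]

theorem conj_invPerm_Rperm (x : M) : MulAut.conj (invPerm M) (Rperm x) = Lperm x⁻¹ := by
  ext z
  simp [MulAut.conj_apply, IPLoop.mul_inv_rev, IPLoop.inv_inv]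

theorem conj_invPerm_Lperm (x : M) : MulAut.conj (invPerm M) (Lperm x) = Rperm x⁻¹ := by
  ext z
  simp [MulAut.conj_apply, IPLoop.mul_inv_rev, IPLoop.inv_inv]

theorem conj_invPerm_innerT (x : M) :
    MulAut.conj (invPerm M) (innerT x) = (Rperm x⁻¹)⁻¹ * Lperm x⁻¹ := by
  rw [innerT, map_mul, map_inv, conj_invPerm_Lperm, conj_invPerm_Rperm]

theorem conj_invPerm_innerR (x y : M) :
    MulAut.conj (invPerm M) (innerR x y) = innerL x⁻¹ y⁻¹ := by
  rw [innerR, innerL, map_mul, map_mul, map_inv, conj_invPerm_Rperm, conj_invPerm_Rperm,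
    conj_invPerm_Rperm, IPLoop.mul_inv_rev]

theorem conj_invPerm_innerL (x y : M) :
    MulAut.conj (invPerm M) (innerL x y) = innerR x⁻¹ y⁻¹ := by
  rw [innerR, innerL, map_mul, map_mul, map_inv, conj_invPerm_Lperm, conj_invPerm_Lperm,
    conj_invPerm_Lperm, IPLoop.mul_inv_rev]

theorem innerT_mem_centralizer_invPerm_iff (x : M) :
    innerT x ∈ Subgroup.centralizer {invPerm M} ↔ ∀ z, x⁻¹ * (z * x) = x⁻¹ * z * x := by
  rw [mem_centralizer_invPerm_iff_conj, conj_invPerm_innerT, Equiv.ext_iff]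
  simp only [innerT_apply, Perm.mul_apply, Lperm_apply, Rperm_inv_apply, ld_eq_inv_mul,
    rd_eq_mul_inv, IPLoop.inv_inv]
  exact forall_congr' fun z => eq_comm

theorem innerR_mem_centralizer_invPerm_iff (x y : M) :
    innerR x y ∈ Subgroup.centralizer {invPerm M} ↔ innerL x⁻¹ y⁻¹ = innerR x y := by
  rw [mem_centralizer_invPerm_iff_conj, conj_invPerm_innerR]

theorem innerL_mem_centralizer_invPerm_iff (x y : M) :
    innerL x y ∈ Subgroup.centralizer {invPerm M} ↔ innerR x⁻¹ y⁻¹ = innerL x y := by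
  rw [mem_centralizer_invPerm_iff_conj, conj_invPerm_innerL]

theorem Inn_le_centralizer_invPerm_iff :
    Inn M ≤ Subgroup.centralizer {invPerm M} ↔
      (∀ x y : M, x * (y * x) = x * y * x) ∧ ∀ x y : M, innerR x y = innerL x⁻¹ y⁻¹ := by
  rw [flexible_iff]
  refine ⟨fun h => ⟨fun x => ?_, fun x y => ?_⟩, fun ⟨hT, hRL⟩ => ?_⟩
  · exact (innerT_mem_centralizer_invPerm_iff x).mp (h (innerT_mem_Inn x))
  · exact ((innerR_mem_centralizer_invPerm_iff x y).mp (h (innerR_mem_Inn x y))).symm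
  refine Subgroup.closure_le _ |>.mpr ?_
  rintro _ (⟨x, rfl⟩ | ⟨x, y, rfl⟩ | ⟨x, y, rfl⟩)
  · exact (innerT_mem_centralizer_invPerm_iff x).mpr (hT x)
  · exact (innerR_mem_centralizer_invPerm_iff x y).mpr (hRL x y).symm
  · refine (innerL_mem_centralizer_invPerm_iff x y).mpr ?_
    simpa only [IPLoop.inv_inv] using hRL x⁻¹ y⁻¹

end IPLoop

/-- An IP loop is RIF (all inner mappings preserve inverses) iff it is flexible and
`R(x,y) = L(x⁻¹,y⁻¹)` for all `x, y`, where `R(x,y) = R(x)R(y)R(xy)⁻¹` and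
`L(x,y) = L(x)L(y)L(yx)⁻¹` (written pointwise using the divisions). -/
theorem rif_iff_flex_and_RL {M : Type*} [IPLoop M] :
    (∀ θ : Equiv.Perm M, θ ∈ Loop.Mlt M → θ 1 = 1 → ∀ x : M, θ x⁻¹ = (θ x)⁻¹) ↔
      ((∀ x y : M, x * (y * x) = (x * y) * x) ∧
        ∀ x y z : M,
          Loop.rd ((z * x) * y) (x * y) = Loop.ld (y⁻¹ * x⁻¹) (y⁻¹ * (x⁻¹ * z))) := by
  have hRL : (∀ x y z : M, Loop.rd ((z * x) * y) (x * y) = Loop.ld (y⁻¹ * x⁻¹) (y⁻¹ * (x⁻¹ * z)))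
      ↔ ∀ x y : M, Loop.innerR x y = Loop.innerL x⁻¹ y⁻¹ := by
    simp only [Equiv.ext_iff, Loop.innerR_apply, Loop.innerL_apply]
  rw [hRL, ← IPLoop.Inn_le_centralizer_invPerm_iff, SetLike.le_def]
  simp only [Loop.mem_Inn_iff, IPLoop.mem_centralizer_invPerm_iff, and_imp]
end

section
/- Every C-loop satisfies R(xy)² = R(x)·R(y(xy)) = R((xy)x)·R(y) for all x, y; concretely, (z·(xy))·(xy) = (z·x)·(y·(xy)) = (z·((xy)x))·y for all x, y, z. -/
namespace CLoopAux

variable {M : Type*} [Loop M]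

/-- The (left) inverse in a loop. -/
def linv (b : M) : M := Loop.rd 1 b

lemma linv_mul (b : M) : linv b * b = 1 := Loop.rd_mul b 1

section
variable (hC : ∀ x y z : M, ((x * y) * y) * z = x * (y * (y * z)))
include hC

/-- Right alternativity. -/
lemma ra (a b : M) : (a * b) * b = a * (b * b) := by
  have h := hC a b 1
  simp only [Loop.mul_one] at h
  exact h

/-- Left alternativity. -/
lemma la (b c : M) : (b * b) * c = b * (b * c) := by
  have h := hC 1 b c
  simp only [Loop.one_mul] at h
  exact h

/-- Squares are middle-nuclear. -/
lemma nmu (a b c : M) : (a * (b * b)) * c = a * ((b * b) * c) := by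
  rw [← ra hC a b, hC, ← la hC b c]

/-- Left inverse property. -/
lemma lip (b v : M) : linv b * (b * v) = v := by
  have h := hC (Loop.rd 1 b) b (Loop.ld b v)
  rw [Loop.rd_mul] at h
  rw [Loop.one_mul, Loop.mul_ld] at h
  exact h.symm

lemma mul_linv (b : M) : b * linv b = 1 := by
  have h := lip hC b (Loop.ld b 1)
  rw [Loop.mul_ld] at h
  have h2 : linv b = Loop.ld b 1 := by
    have := h
    rwa [Loop.mul_one] at this
  rw [h2, Loop.mul_ld]

/-- Right inverse property. -/
lemma rip (v b : M) : (v * b) * linv b = v := by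
  have h := hC (Loop.rd v b) b (linv b)
  rw [mul_linv hC] at h
  rw [Loop.mul_one, Loop.rd_mul] at h
  exact h

lemma linv_linv (b : M) : linv (linv b) = b := by
  have h1 : linv b * b = 1 := linv_mul b
  have h2 : linv b * linv (linv b) = 1 := mul_linv hC (linv b)
  calc linv (linv b) = Loop.ld (linv b) (linv b * linv (linv b)) :=
        (Loop.ld_mul _ _).symm
    _ = Loop.ld (linv b) (linv b * b) := by rw [h1, h2]
    _ = b := Loop.ld_mul _ _

lemma lip' (b v : M) : b * (linv b * v) = v := by
  have h := lip hC (linv b) v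
  rwa [linv_linv hC] at h

lemma rip' (v b : M) : (v * linv b) * b = v := by
  have h := rip hC v (linv b)
  rwa [linv_linv hC] at h

/-- Antiautomorphic inverse property. -/
lemma aaip (a b : M) : linv (a * b) = linv b * linv a := by
  have h1 : linv a * (a * b) = b := lip hC a b
  have h2 : b * linv (a * b) = linv a := by
    have h := rip hC (linv a) (a * b)
    rwa [h1] at h
  have h3 := lip hC b (linv (a * b))
  rw [h2] at h3
  exact h3.symm

/-- Key reassociation: pull a square out. -/
lemma key (z b u : M) : z * u = (z * (b * b)) * ((linv b * linv b) * u) := by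
  have h1 : (b * b) * ((linv b * linv b) * u) = u := by
    rw [la hC b ((linv b * linv b) * u), la hC (linv b) u,
      lip' hC b (linv b * u), lip' hC b u]
  rw [nmu hC z b ((linv b * linv b) * u), h1]

end

end CLoopAux

open CLoopAux in
/-- Every C-loop satisfies `R(xy)² = R(x)R(y(xy)) = R((xy)x)R(y)` (pointwise). -/
theorem c_loop_R_identity {M : Type*} [Loop M]
    (hC : ∀ x y z : M, ((x * y) * y) * z = x * (y * (y * z))) :
    ∀ x y z : M,
      (z * (x * y)) * (x * y) = (z * x) * (y * (x * y)) ∧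
        (z * (x * y)) * (x * y) = (z * ((x * y) * x)) * y := by
  intro x y z
  -- h1 : (xy)⁻¹ * x = y⁻¹
  have h0 : (x * y) * linv y = x := rip hC x y
  have h1 : linv (x * y) * x = linv y := by
    have h := lip hC (x * y) (linv y)
    rwa [h0] at h
  -- h2 : ((xy)⁻¹(xy)⁻¹) x = (xy)⁻¹ y⁻¹
  have h2 : (linv (x * y) * linv (x * y)) * x = linv (x * y) * linv y := by
    rw [la hC (linv (x * y)) x, h1]
  -- e1 : ((xy)⁻¹(xy)⁻¹ · x)⁻¹ = x⁻¹ · (xy)(xy)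
  have e1 : linv ((linv (x * y) * linv (x * y)) * x)
      = linv x * ((x * y) * (x * y)) := by
    rw [aaip hC, aaip hC, linv_linv hC]
  -- h3 : y(xy) = x⁻¹ · (xy)(xy)
  have h3 : y * (x * y) = linv x * ((x * y) * (x * y)) := by
    have e2 : linv (linv (x * y) * linv y) = y * (x * y) := by
      rw [aaip hC, linv_linv hC, linv_linv hC]
    calc y * (x * y) = linv (linv (x * y) * linv y) := e2.symm
      _ = linv ((linv (x * y) * linv (x * y)) * x) := by rw [h2]
      _ = linv x * ((x * y) * (x * y)) := e1
  constructor
  · -- first identity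
    have h4 := key hC z (x * y) x
    calc (z * (x * y)) * (x * y) = z * ((x * y) * (x * y)) := ra hC z (x * y)
      _ = ((z * ((x * y) * (x * y))) * ((linv (x * y) * linv (x * y)) * x)) *
            linv ((linv (x * y) * linv (x * y)) * x) :=
          (rip hC _ _).symm
      _ = (z * x) * (linv x * ((x * y) * (x * y))) := by rw [e1, ← h4]
      _ = (z * x) * (y * (x * y)) := by rw [← h3]
  · -- second identity
    have g2 : (linv (x * y) * linv (x * y)) * ((x * y) * x) = linv y := by
      rw [la hC (linv (x * y)) ((x * y) * x), lip hC (x * y) x, h1]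
    calc (z * (x * y)) * (x * y) = z * ((x * y) * (x * y)) := ra hC z (x * y)
      _ = ((z * ((x * y) * (x * y))) * linv y) * y := (rip' hC _ y).symm
      _ = (z * ((x * y) * x)) * y := by
          rw [← g2, ← key hC z (x * y) ((x * y) * x)]
end

section
/- A loop satisfying the identity (z·x)·((yx)y) = (z·(x(yx)))·y for all x, y, z (i.e., R(x)R((yx)y) = R(x(yx))R(y)) is an alternative loop with the inverse property. -/
/-- A loop satisfying `R(x)R((yx)y) = R(x(yx))R(y)` is an alternative loop
with the inverse property. -/
theorem W1'_implies_alternative_IP {M : Type*} [Loop M]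
    (h : ∀ x y z : M, (z * x) * ((y * x) * y) = (z * (x * (y * x))) * y) :
    (∀ x y : M, x * (x * y) = (x * x) * y) ∧
      (∀ x y : M, (y * x) * x = y * (x * x)) ∧
      ∃ inv : M → M, ∀ x y : M, inv x * (x * y) = y ∧ (y * x) * inv x = y := by
  have lcan : ∀ a b c : M, a * b = a * c → b = c := by
    intro a b c hbc
    have h1 := Loop.ld_mul a b
    have h2 := Loop.ld_mul a c
    rw [hbc, h2] at h1
    exact h1.symm
  have rcan : ∀ a b c : M, b * a = c * a → b = c := by
    intro a b c hbc
    have h1 := Loop.mul_rd a b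
    have h2 := Loop.mul_rd a c
    rw [hbc, h2] at h1
    exact h1.symm
  let i : M → M := fun x => Loop.rd 1 x
  have inv_mul : ∀ x : M, i x * x = 1 := fun x => Loop.rd_mul x 1
  -- right alternative law
  have ralt : ∀ x y : M, (y * x) * x = y * (x * x) := by
    intro x y
    have h1 := h x 1 y
    simpa [Loop.one_mul, Loop.mul_one] using h1
  -- left inverse property
  have lip : ∀ x u : M, i x * (x * u) = u := by
    intro x u
    have h1 := h x (Loop.rd u x) (i x)
    rw [inv_mul, Loop.one_mul, Loop.rd_mul] at h1
    exact (rcan _ _ _ h1).symm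
  have mul_inv : ∀ x : M, x * i x = 1 := by
    intro x
    have h1 : i x * (x * i x) = i x * 1 := by rw [Loop.mul_one]; exact lip x (i x)
    exact lcan _ _ _ h1
  have inv_inv : ∀ x : M, i (i x) = x := by
    intro x
    refine rcan (i x) _ _ ?_
    rw [inv_mul (i x), mul_inv x]
  have lip' : ∀ x u : M, x * (i x * u) = u := by
    intro x u
    have h1 := lip (i x) u
    rwa [inv_inv] at h1
  -- key identity: i (x * s) * x = i s
  have e7 : ∀ x s : M, i (x * s) * x = i s := by
    intro x s
    have h1 := h x (Loop.rd s x) (i (x * s))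
    rw [Loop.rd_mul, inv_mul, Loop.one_mul] at h1
    -- h1 : (i (x*s) * x) * (s * rd s x) = rd s x
    have h2 : i (i (x * s) * x) * ((i (x * s) * x) * (s * Loop.rd s x))
        = s * Loop.rd s x := lip _ _
    rw [h1] at h2
    have h3 := rcan _ _ _ h2
    have h4 := congrArg i h3
    rwa [inv_inv] at h4
  have e9 : ∀ x w : M, i (i x * w) = i w * x := by
    intro x w
    have h1 := e7 x (i x * w)
    rw [lip'] at h1
    exact h1.symm
  -- anti-automorphic inverse
  have e10 : ∀ u x : M, i (u * x) = i x * i u := by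
    intro u x
    have h1 := e9 x (i u)
    rw [inv_inv] at h1
    have h2 := congrArg i h1
    rw [inv_inv] at h2
    exact h2.symm
  -- right inverse property
  have rip : ∀ x u : M, (u * x) * i x = u := by
    intro x u
    have h1 := e7 (i x) (i u)
    rw [inv_inv, ← e10 u x] at h1
    rwa [inv_inv] at h1
  -- left alternative law
  have lalt : ∀ a b : M, a * (a * b) = (a * a) * b := by
    intro a b
    have h1 := ralt (i a) (i b)
    have h2 := congrArg i h1
    simp only [e10, inv_inv] at h2
    exact h2
  exact ⟨lalt, ralt, i, fun x y => ⟨lip x y, rip x y⟩⟩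
end

section
/- Every ARIF loop is an alternative IP loop. -/
/-- Every ARIF loop is an alternative IP loop. -/
theorem arif_is_alternative_IP {M : Type*} [Loop M]
    (hflex : ∀ x y : M, x * (y * x) = (x * y) * x)
    (hW1 : ∀ x y z : M, (z * x) * (y * (x * y)) = (z * (x * (y * x))) * y)
    (hW2 : ∀ x y z : M, (y * (x * y)) * (x * z) = y * ((x * (y * x)) * z)) :
    (∀ x y : M, x * (x * y) = (x * x) * y) ∧
      (∀ x y : M, (y * x) * x = y * (x * x)) ∧
      ∃ inv : M → M, ∀ x y : M, inv x * (x * y) = y ∧ (y * x) * inv x = y := by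
  have lcancel : ∀ x a b : M, x * a = x * b → a = b := by
    intro x a b h
    have := congrArg (Loop.ld x) h
    rwa [Loop.ld_mul, Loop.ld_mul] at this
  have rcancel : ∀ x a b : M, a * x = b * x → a = b := by
    intro x a b h
    have := congrArg (fun t => Loop.rd t x) h
    simpa [Loop.mul_rd] using this
  have leftalt : ∀ x y : M, x * (x * y) = (x * x) * y := by
    intro x y
    have := hW2 x 1 y
    simpa [Loop.one_mul, Loop.mul_one] using this
  have rightalt : ∀ x y : M, (y * x) * x = y * (x * x) := by
    intro x y
    have := hW1 x 1 y
    simpa [Loop.one_mul, Loop.mul_one] using this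
  refine ⟨leftalt, rightalt, fun x => Loop.ld x 1, fun x y => ?_⟩
  set i := Loop.ld x 1 with hi
  have hri : x * i = 1 := Loop.mul_ld x 1
  have hli : i * x = 1 := by
    apply lcancel x
    rw [Loop.mul_one]
    calc x * (i * x) = (x * i) * x := hflex x i
      _ = x := by rw [hri, Loop.one_mul]
  constructor
  · -- LIP: i * (x * y) = y
    have key : ∀ z : M, i * (x * (z * x)) = z * x := by
      intro z
      have h1 := hW1 x z i
      rw [hli, Loop.one_mul] at h1
      -- (z * (x * z)) = (i * (x * (z * x))) * z
      have h2 : (z * x) * z = (i * (x * (z * x))) * z := by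
        rw [← hflex z x]; exact h1
      exact (rcancel z _ _ h2).symm
    have := key (Loop.rd y x)
    rwa [Loop.rd_mul] at this
  · -- RIP: (y * x) * i = y
    have key : ∀ z : M, (x * (z * x)) * i = x * z := by
      intro z
      have h1 := hW2 x z i
      rw [hri, Loop.mul_one] at h1
      -- z * (x * z) = z * ((x * (z * x)) * i)
      exact (lcancel z _ _ h1).symm
    have := key (Loop.ld x y)
    rw [hflex, Loop.mul_ld] at this
    exact this
end

section
/- Every ARIF loop satisfies R(x)R(y²x⁻¹)R(x) = R(xy²) and L(x)L(x⁻¹y²)L(x) = L(y²x) for all x, y; concretely, (((z·x)·((yy)x⁻¹))·x) = z·(x·(yy)) for all x, y, z. -/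
/-- Every ARIF loop satisfies `R(x)R(y²x⁻¹)R(x) = R(xy²)` and
`L(x)L(x⁻¹y²)L(x) = L(y²x)` (pointwise; `x⁻¹` is the IP inverse). -/
theorem arif_premoufang {M : Type*} [IPLoop M]
    (hflex : ∀ x y : M, x * (y * x) = (x * y) * x)
    (hW1 : ∀ x y z : M, (z * x) * (y * (x * y)) = (z * (x * (y * x))) * y)
    (hW2 : ∀ x y z : M, (y * (x * y)) * (x * z) = y * ((x * (y * x)) * z)) :
    ∀ x y z : M,
      ((z * x) * ((y * y) * x⁻¹)) * x = z * (x * (y * y)) ∧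
        x * ((x⁻¹ * (y * y)) * (x * z)) = ((y * y) * x) * z := by
  have one_mul' : ∀ x : M, 1 * x = x := Loop.one_mul
  have mul_one' : ∀ x : M, x * 1 = x := Loop.mul_one
  have ilc : ∀ x y : M, x⁻¹ * (x * y) = y := IPLoop.inv_mul_cancel_left
  have irc : ∀ x y : M, (y * x) * x⁻¹ = y := IPLoop.mul_inv_cancel_right
  -- x⁻¹ * x = 1
  have inv_mul' : ∀ x : M, x⁻¹ * x = 1 := by
    intro x
    have h := ilc x 1
    rwa [mul_one'] at h
  -- (x⁻¹)⁻¹ = x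
  have inv_inv' : ∀ x : M, x⁻¹⁻¹ = x := by
    intro x
    have h := ilc x⁻¹ x
    rwa [inv_mul', mul_one'] at h
  -- (a * x⁻¹) * x = a
  have irc' : ∀ x a : M, (a * x⁻¹) * x = a := by
    intro x a
    have h := irc x⁻¹ a
    rwa [inv_inv'] at h
  -- x * (x⁻¹ * a) = a
  have ilc' : ∀ x a : M, x * (x⁻¹ * a) = a := by
    intro x a
    have h := ilc x⁻¹ a
    rwa [inv_inv'] at h
  -- right alternativity: (z*y)*y = z*(y*y)
  have ralt : ∀ y z : M, (z * y) * y = z * (y * y) := by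
    intro y z
    have h := hW1 1 y z
    rw [mul_one', one_mul', mul_one', one_mul'] at h
    exact h.symm
  -- left alternativity: (y*y)*z = y*(y*z)
  have lalt : ∀ y z : M, (y * y) * z = y * (y * z) := by
    intro y z
    have h := hW2 1 y z
    rwa [one_mul', one_mul', mul_one', one_mul'] at h
  -- V : (y*x⁻¹) * (x * (y*x⁻¹)) = (y*y) * x⁻¹
  have hV : ∀ x y : M, (y * x⁻¹) * (x * (y * x⁻¹)) = (y * y) * x⁻¹ := by
    intro x y
    rw [hflex (y * x⁻¹) x, irc' x y, ← lalt y x⁻¹]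
  -- key4 : x⁻¹ * ((x*y) * x⁻¹) = y * x⁻¹
  have key4 : ∀ x y : M, x⁻¹ * ((x * y) * x⁻¹) = y * x⁻¹ := by
    intro x y
    rw [hflex x⁻¹ (x * y), ilc x y]
  -- key4m : (x⁻¹ * (y*x)) * x⁻¹ = x⁻¹ * y
  have key4m : ∀ x y : M, (x⁻¹ * (y * x)) * x⁻¹ = x⁻¹ * y := by
    intro x y
    rw [← hflex x⁻¹ (y * x), irc x y]
  -- Vm : ((x⁻¹*y) * x) * (x⁻¹*y) = x⁻¹ * (y*y)
  have hVm : ∀ x y : M, ((x⁻¹ * y) * x) * (x⁻¹ * y) = x⁻¹ * (y * y) := by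
    intro x y
    rw [← hflex (x⁻¹ * y) x, ilc' x y, ralt y x⁻¹]
  intro x y z
  constructor
  · calc ((z * x) * ((y * y) * x⁻¹)) * x
        = ((z * x) * ((y * x⁻¹) * (x * (y * x⁻¹)))) * x := by rw [hV x y]
      _ = ((z * (x * ((y * x⁻¹) * x))) * (y * x⁻¹)) * x := by rw [hW1 x (y * x⁻¹) z]
      _ = ((z * (x * y)) * (y * x⁻¹)) * x := by rw [irc' x y]
      _ = ((z * (x * y)) * (x⁻¹ * ((x * y) * x⁻¹))) * x := by rw [key4 x y]
      _ = ((z * ((x * y) * (x⁻¹ * (x * y)))) * x⁻¹) * x := by rw [hW1 (x * y) x⁻¹ z]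
      _ = z * ((x * y) * (x⁻¹ * (x * y))) := by rw [irc' x (z * ((x * y) * (x⁻¹ * (x * y))))]
      _ = z * ((x * y) * y) := by rw [ilc x y]
      _ = z * (x * (y * y)) := by rw [ralt y x]
  · calc x * ((x⁻¹ * (y * y)) * (x * z))
        = x * ((((x⁻¹ * y) * x) * (x⁻¹ * y)) * (x * z)) := by rw [hVm x y]
      _ = x * (((x⁻¹ * y) * (x * (x⁻¹ * y))) * (x * z)) := by rw [hflex (x⁻¹ * y) x]
      _ = x * ((x⁻¹ * y) * ((x * ((x⁻¹ * y) * x)) * z)) := by rw [hW2 x (x⁻¹ * y) z]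
      _ = x * ((x⁻¹ * y) * (((x * (x⁻¹ * y)) * x) * z)) := by rw [hflex x (x⁻¹ * y)]
      _ = x * ((x⁻¹ * y) * ((y * x) * z)) := by rw [ilc' x y]
      _ = x * (((x⁻¹ * (y * x)) * x⁻¹) * ((y * x) * z)) := by rw [key4m x y]
      _ = x * ((x⁻¹ * ((y * x) * x⁻¹)) * ((y * x) * z)) := by rw [hflex x⁻¹ (y * x)]
      _ = x * (x⁻¹ * (((y * x) * (x⁻¹ * (y * x))) * z)) := by rw [hW2 (y * x) x⁻¹ z]
      _ = ((y * x) * (x⁻¹ * (y * x))) * z := by rw [ilc' x (((y * x) * (x⁻¹ * (y * x))) * z)]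
      _ = (((y * x) * x⁻¹) * (y * x)) * z := by rw [hflex (y * x) x⁻¹]
      _ = (y * (y * x)) * z := by rw [irc x y]
      _ = ((y * y) * x) * z := by rw [← lalt y x]
end

section
/- Every ARIF loop is power alternative: for all x and all integers n, L(xⁿ) = L(x)ⁿ and R(xⁿ) = R(x)ⁿ, where xⁿ = 1·L(x)ⁿ. -/
/-- Integer powers: `xⁿ = 1 · L(x)ⁿ`. -/
def Loop.pow {M : Type*} [Loop M] (x : M) (n : ℤ) : M := (Loop.Lperm x ^ n) 1

section ArifAux

variable {M : Type*} [Loop M]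

theorem Loop.mul_left_cancel' {x a b : M} (h : x * a = x * b) : a = b := by
  have := congrArg (Loop.ld x) h
  rwa [Loop.ld_mul, Loop.ld_mul] at this

theorem Loop.mul_right_cancel' {x a b : M} (h : a * x = b * x) : a = b := by
  have := congrArg (fun y => Loop.rd y x) h
  simpa only [Loop.mul_rd] using this

theorem arif_lip (hflex : ∀ x y : M, x * (y * x) = (x * y) * x)
    (hW1 : ∀ x y z : M, (z * x) * (y * (x * y)) = (z * (x * (y * x))) * y)
    (x w : M) : Loop.rd 1 x * (x * w) = w := by
  have h := hW1 x (Loop.rd w x) (Loop.rd 1 x)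
  simp only [Loop.rd_mul, Loop.one_mul] at h
  rw [hflex (Loop.rd w x) x, Loop.rd_mul] at h
  exact (Loop.mul_right_cancel' h).symm

theorem arif_rip (hflex : ∀ x y : M, x * (y * x) = (x * y) * x)
    (hW2 : ∀ x y z : M, (y * (x * y)) * (x * z) = y * ((x * (y * x)) * z))
    (x u : M) : (u * x) * Loop.ld x 1 = u := by
  have h := hW2 x (Loop.ld x u) (Loop.ld x 1)
  rw [Loop.mul_ld x 1, Loop.mul_one] at h
  have h2 := Loop.mul_left_cancel' h
  rw [hflex x (Loop.ld x u), Loop.mul_ld] at h2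
  exact h2.symm

theorem arif_inv_eq (hflex : ∀ x y : M, x * (y * x) = (x * y) * x)
    (hW2 : ∀ x y z : M, (y * (x * y)) * (x * z) = y * ((x * (y * x)) * z))
    (x : M) : Loop.rd 1 x = Loop.ld x 1 := by
  have h := arif_rip hflex hW2 x (Loop.rd 1 x)
  rw [Loop.rd_mul, Loop.one_mul] at h
  exact h.symm

theorem arif_lip' (hflex : ∀ x y : M, x * (y * x) = (x * y) * x)
    (hW1 : ∀ x y z : M, (z * x) * (y * (x * y)) = (z * (x * (y * x))) * y)
    (hW2 : ∀ x y z : M, (y * (x * y)) * (x * z) = y * ((x * (y * x)) * z))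
    (x w : M) : Loop.ld x 1 * (x * w) = w := by
  rw [← arif_inv_eq hflex hW2 x]
  exact arif_lip hflex hW1 x w

theorem arif_Lperm_inv (hflex : ∀ x y : M, x * (y * x) = (x * y) * x)
    (hW1 : ∀ x y z : M, (z * x) * (y * (x * y)) = (z * (x * (y * x))) * y)
    (hW2 : ∀ x y z : M, (y * (x * y)) * (x * z) = y * ((x * (y * x)) * z))
    (x : M) : Loop.Lperm (Loop.ld x 1) = (Loop.Lperm x)⁻¹ := by
  apply eq_inv_of_mul_eq_one_left
  apply Equiv.ext
  intro w
  exact arif_lip' hflex hW1 hW2 x w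

theorem arif_Rperm_inv (hflex : ∀ x y : M, x * (y * x) = (x * y) * x)
    (hW2 : ∀ x y z : M, (y * (x * y)) * (x * z) = y * ((x * (y * x)) * z))
    (x : M) : Loop.Rperm (Loop.ld x 1) = (Loop.Rperm x)⁻¹ := by
  apply eq_inv_of_mul_eq_one_left
  apply Equiv.ext
  intro u
  exact arif_rip hflex hW2 x u

theorem Loop.Lperm_one : Loop.Lperm (1 : M) = 1 :=
  Equiv.ext fun y => Loop.one_mul y

theorem Loop.Rperm_one_s11 : Loop.Rperm (1 : M) = 1 :=
  Equiv.ext fun y => Loop.mul_one y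

theorem Loop.pow_zero' (x : M) : Loop.pow x 0 = 1 := by
  unfold Loop.pow
  rw [zpow_zero]
  rfl

theorem Loop.pow_one' (x : M) : Loop.pow x 1 = x := by
  unfold Loop.pow
  rw [zpow_one]
  exact Loop.mul_one x

theorem Loop.pow_neg_one' (x : M) : Loop.pow x (-1) = Loop.ld x 1 := by
  unfold Loop.pow
  rw [zpow_neg, zpow_one]
  rfl

/-- The key step: from the ARIF identities with `x := x^s`, `y := x^t`
we get the power-alternative law at exponent `2t + s`. -/
theorem arif_step
    (hW1 : ∀ x y z : M, (z * x) * (y * (x * y)) = (z * (x * (y * x))) * y)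
    (hW2 : ∀ x y z : M, (y * (x * y)) * (x * z) = y * ((x * (y * x)) * z))
    (x : M) (k s t : ℤ) (hk : k = 2 * t + s)
    (hLs : Loop.Lperm (Loop.pow x s) = Loop.Lperm x ^ s)
    (hLt : Loop.Lperm (Loop.pow x t) = Loop.Lperm x ^ t)
    (hLu : Loop.Lperm (Loop.pow x (t + 2 * s)) = Loop.Lperm x ^ (t + 2 * s))
    (hRs : Loop.Rperm (Loop.pow x s) = Loop.Rperm x ^ s)
    (hRt : Loop.Rperm (Loop.pow x t) = Loop.Rperm x ^ t)
    (hRu : Loop.Rperm (Loop.pow x (t + 2 * s)) = Loop.Rperm x ^ (t + 2 * s)) :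
    Loop.Lperm (Loop.pow x k) = Loop.Lperm x ^ k ∧
      Loop.Rperm (Loop.pow x k) = Loop.Rperm x ^ k := by
  subst hk
  set a := Loop.pow x s with ha
  set b := Loop.pow x t with hb
  have e1 : b * (a * b) = Loop.pow x (2 * t + s) := by
    have h1 : b * (a * b) = Loop.Lperm (Loop.pow x t) (Loop.Lperm (Loop.pow x s) b) := rfl
    rw [h1, hLs, hLt]
    show (Loop.Lperm x ^ t) ((Loop.Lperm x ^ s) ((Loop.Lperm x ^ t) 1)) =
      (Loop.Lperm x ^ (2 * t + s)) 1
    rw [← Equiv.Perm.mul_apply, ← Equiv.Perm.mul_apply, ← zpow_add, ← zpow_add]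
    have : t + s + t = 2 * t + s := by ring
    rw [this]
  have e2 : a * (b * a) = Loop.pow x (t + 2 * s) := by
    have h1 : a * (b * a) = Loop.Lperm (Loop.pow x s) (Loop.Lperm (Loop.pow x t) a) := rfl
    rw [h1, hLs, hLt]
    show (Loop.Lperm x ^ s) ((Loop.Lperm x ^ t) ((Loop.Lperm x ^ s) 1)) =
      (Loop.Lperm x ^ (t + 2 * s)) 1
    rw [← Equiv.Perm.mul_apply, ← Equiv.Perm.mul_apply, ← zpow_add, ← zpow_add]
    have : s + t + s = t + 2 * s := by ring
    rw [this]
  constructor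
  · have W2p : Loop.Lperm (b * (a * b)) * Loop.Lperm a =
        Loop.Lperm b * Loop.Lperm (a * (b * a)) :=
      Equiv.ext fun z => hW2 a b z
    rw [e1, e2, ha, hb, hLs, hLt, hLu] at W2p
    have h2 : Loop.Lperm (Loop.pow x (2 * t + s)) =
        Loop.Lperm x ^ t * Loop.Lperm x ^ (t + 2 * s) * (Loop.Lperm x ^ s)⁻¹ := by
      rw [← W2p]; group
    rw [h2, ← zpow_neg, ← zpow_add, ← zpow_add]
    have : t + (t + 2 * s) + -s = 2 * t + s := by ring
    rw [this]
  · have W1p : Loop.Rperm (b * (a * b)) * Loop.Rperm a =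
        Loop.Rperm b * Loop.Rperm (a * (b * a)) :=
      Equiv.ext fun z => hW1 a b z
    rw [e1, e2, ha, hb, hRs, hRt, hRu] at W1p
    have h2 : Loop.Rperm (Loop.pow x (2 * t + s)) =
        Loop.Rperm x ^ t * Loop.Rperm x ^ (t + 2 * s) * (Loop.Rperm x ^ s)⁻¹ := by
      rw [← W1p]; group
    rw [h2, ← zpow_neg, ← zpow_add, ← zpow_add]
    have : t + (t + 2 * s) + -s = 2 * t + s := by ring
    rw [this]

theorem arif_main
    (hflex : ∀ x y : M, x * (y * x) = (x * y) * x)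
    (hW1 : ∀ x y z : M, (z * x) * (y * (x * y)) = (z * (x * (y * x))) * y)
    (hW2 : ∀ x y z : M, (y * (x * y)) * (x * z) = y * ((x * (y * x)) * z))
    (x : M) : ∀ n : ℕ, ∀ k : ℤ, k.natAbs ≤ n →
      Loop.Lperm (Loop.pow x k) = Loop.Lperm x ^ k ∧
        Loop.Rperm (Loop.pow x k) = Loop.Rperm x ^ k := by
  have base1 : Loop.Lperm (Loop.pow x 1) = Loop.Lperm x ^ (1 : ℤ) ∧
      Loop.Rperm (Loop.pow x 1) = Loop.Rperm x ^ (1 : ℤ) := by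
    rw [Loop.pow_one', zpow_one, zpow_one]
    exact ⟨rfl, rfl⟩
  have baseneg1 : Loop.Lperm (Loop.pow x (-1)) = Loop.Lperm x ^ (-1 : ℤ) ∧
      Loop.Rperm (Loop.pow x (-1)) = Loop.Rperm x ^ (-1 : ℤ) := by
    rw [Loop.pow_neg_one', zpow_neg_one, zpow_neg_one]
    exact ⟨arif_Lperm_inv hflex hW1 hW2 x, arif_Rperm_inv hflex hW2 x⟩
  intro n
  induction n with
  | zero =>
    intro k hk
    have hk0 : k = 0 := by omega
    subst hk0
    rw [Loop.pow_zero', zpow_zero, zpow_zero]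
    exact ⟨Loop.Lperm_one, Loop.Rperm_one_s11⟩
  | succ n ih =>
    intro k hk
    by_cases h : k.natAbs ≤ n
    · exact ih k h
    · rcases Nat.eq_zero_or_pos n with hn | hn
      · subst hn
        have : k = 1 ∨ k = -1 := by omega
        rcases this with rfl | rfl
        · exact base1
        · exact baseneg1
      · have hk1 : k = (n : ℤ) + 1 ∨ k = -((n : ℤ) + 1) := by omega
        rcases hk1 with rfl | rfl
        · have hs : (1 - (n : ℤ)).natAbs ≤ n := by omega
          have ht : ((n : ℤ)).natAbs ≤ n := by omega
          have hu : ((n : ℤ) + 2 * (1 - (n : ℤ))).natAbs ≤ n := by omega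
          exact arif_step hW1 hW2 x ((n : ℤ) + 1) (1 - (n : ℤ)) (n : ℤ) (by ring)
            (ih _ hs).1 (ih _ ht).1 (ih _ hu).1 (ih _ hs).2 (ih _ ht).2 (ih _ hu).2
        · have hs : ((n : ℤ) - 1).natAbs ≤ n := by omega
          have ht : (-(n : ℤ)).natAbs ≤ n := by omega
          have hu : (-(n : ℤ) + 2 * ((n : ℤ) - 1)).natAbs ≤ n := by omega
          exact arif_step hW1 hW2 x (-((n : ℤ) + 1)) ((n : ℤ) - 1) (-(n : ℤ)) (by ring)
            (ih _ hs).1 (ih _ ht).1 (ih _ hu).1 (ih _ hs).2 (ih _ ht).2 (ih _ hu).2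

end ArifAux

/-- Every ARIF loop is power alternative: `L(xⁿ) = L(x)ⁿ` and `R(xⁿ) = R(x)ⁿ`
for all integers `n`, where `xⁿ = 1·L(x)ⁿ`. -/
theorem arif_power_alternative {M : Type*} [Loop M]
    (hflex : ∀ x y : M, x * (y * x) = (x * y) * x)
    (hW1 : ∀ x y z : M, (z * x) * (y * (x * y)) = (z * (x * (y * x))) * y)
    (hW2 : ∀ x y z : M, (y * (x * y)) * (x * z) = y * ((x * (y * x)) * z)) :
    ∀ (x : M) (n : ℤ),
      Loop.Lperm (Loop.pow x n) = (Loop.Lperm x) ^ n ∧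
        Loop.Rperm (Loop.pow x n) = (Loop.Rperm x) ^ n := by
  intro x n
  exact arif_main hflex hW1 hW2 x n.natAbs n le_rfl
end

section
/- A commutative flexible power alternative loop satisfying (xⁱ·yᵐ)·(yⁿ·xʲ) = xⁱ·(y^{m+n}·xʲ) for all integers i, j, m, n is diassociative (every 2-generated subloop is a group). -/
/-- Membership in the subloop generated by `a` and `b`. -/
inductive Loop.genBy {M : Type*} [Loop M] (a b : M) : M → Prop
  | one : Loop.genBy a b 1
  | fst : Loop.genBy a b a
  | snd : Loop.genBy a b b
  | mul {x y : M} : Loop.genBy a b x → Loop.genBy a b y → Loop.genBy a b (x * y)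
  | ld {x y : M} : Loop.genBy a b x → Loop.genBy a b y → Loop.genBy a b (Loop.ld x y)
  | rd {x y : M} : Loop.genBy a b x → Loop.genBy a b y → Loop.genBy a b (Loop.rd x y)

/-- A commutative flexible power alternative loop satisfying
`(xⁱ·yᵐ)·(yⁿ·xʲ) = xⁱ·(y^{m+n}·xʲ)` for all integers is diassociative. -/
theorem comm_flex_pa_diassociative {M : Type*} [Loop M]
    (hcomm : ∀ x y : M, x * y = y * x)
    (hflex : ∀ x y : M, x * (y * x) = (x * y) * x)
    (hPA : ∀ (x : M) (i : ℤ),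
      Loop.Lperm (Loop.pow x i) = (Loop.Lperm x) ^ i ∧
        Loop.Rperm (Loop.pow x i) = (Loop.Rperm x) ^ i)
    (hid : ∀ (x y : M) (i j m n : ℤ),
      (Loop.pow x i * Loop.pow y m) * (Loop.pow y n * Loop.pow x j) =
        Loop.pow x i * (Loop.pow y (m + n) * Loop.pow x j)) :
    ∀ a b x y z : M, Loop.genBy a b x → Loop.genBy a b y → Loop.genBy a b z →
      (x * y) * z = x * (y * z) := by
  intro a b x y z hx hy hz
  -- `x^i * w = L(x)^i w`
  have hL : ∀ (x : M) (i : ℤ) (w : M), Loop.pow x i * w = ((Loop.Lperm x) ^ i) w := by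
    intro x i w
    have h := (hPA x i).1
    have : Loop.Lperm (Loop.pow x i) w = ((Loop.Lperm x) ^ i) w := by rw [h]
    simpa [Loop.Lperm] using this
  have hpowadd : ∀ (x : M) (i j : ℤ) (w : M),
      Loop.pow x i * (Loop.pow x j * w) = Loop.pow x (i + j) * w := by
    intro x i j w
    rw [hL, hL, hL, zpow_add, Equiv.Perm.mul_apply]
  have pow_zero : ∀ x : M, Loop.pow x 0 = 1 := by
    intro x; simp [Loop.pow]
  have pow_one : ∀ x : M, Loop.pow x 1 = x := by
    intro x
    show (Loop.Lperm x ^ (1 : ℤ)) 1 = x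
    rw [zpow_one]
    show x * 1 = x
    exact Loop.mul_one x
  -- product formula
  have key : ∀ i m j n : ℤ, (Loop.pow a i * Loop.pow b m) * (Loop.pow a j * Loop.pow b n)
      = Loop.pow a (i + j) * Loop.pow b (m + n) := by
    intro i m j n
    rw [hcomm (Loop.pow a j) (Loop.pow b n), hid a b i j m n,
      hcomm (Loop.pow b (m + n)) (Loop.pow a j), hpowadd]
  -- every generated element has the form a^i * b^m
  have hP : ∀ w, Loop.genBy a b w → ∃ i m : ℤ, w = Loop.pow a i * Loop.pow b m := by
    intro w hw
    induction hw with
    | one => exact ⟨0, 0, by rw [pow_zero, pow_zero, Loop.one_mul]⟩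
    | fst => exact ⟨1, 0, by rw [pow_one, pow_zero, Loop.mul_one]⟩
    | snd => exact ⟨0, 1, by rw [pow_one, pow_zero, Loop.one_mul]⟩
    | mul hu hv ihu ihv =>
      obtain ⟨i, m, rfl⟩ := ihu
      obtain ⟨j, n, rfl⟩ := ihv
      exact ⟨i + j, m + n, key i m j n⟩
    | ld hu hv ihu ihv =>
      obtain ⟨i, m, rfl⟩ := ihu
      obtain ⟨j, n, rfl⟩ := ihv
      refine ⟨j - i, n - m, ?_⟩
      have hc : (Loop.pow a i * Loop.pow b m) *
          (Loop.pow a (j - i) * Loop.pow b (n - m)) =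
          Loop.pow a j * Loop.pow b n := by
        rw [key]
        congr 1
        · congr 1; ring
        · congr 1; ring
      calc Loop.ld (Loop.pow a i * Loop.pow b m) (Loop.pow a j * Loop.pow b n)
          = Loop.ld (Loop.pow a i * Loop.pow b m)
              ((Loop.pow a i * Loop.pow b m) *
                (Loop.pow a (j - i) * Loop.pow b (n - m))) := by rw [hc]
        _ = Loop.pow a (j - i) * Loop.pow b (n - m) := Loop.ld_mul _ _
    | rd hu hv ihu ihv =>
      obtain ⟨i, m, rfl⟩ := ihu
      obtain ⟨j, n, rfl⟩ := ihv
      refine ⟨i - j, m - n, ?_⟩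
      have hc : (Loop.pow a (i - j) * Loop.pow b (m - n)) *
          (Loop.pow a j * Loop.pow b n) =
          Loop.pow a i * Loop.pow b m := by
        rw [key]
        congr 1
        · congr 1; ring
        · congr 1; ring
      calc Loop.rd (Loop.pow a i * Loop.pow b m) (Loop.pow a j * Loop.pow b n)
          = Loop.rd ((Loop.pow a (i - j) * Loop.pow b (m - n)) *
              (Loop.pow a j * Loop.pow b n)) (Loop.pow a j * Loop.pow b n) := by rw [hc]
        _ = Loop.pow a (i - j) * Loop.pow b (m - n) := Loop.mul_rd _ _
  obtain ⟨i, m, rfl⟩ := hP x hx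
  obtain ⟨j, n, rfl⟩ := hP y hy
  obtain ⟨k, p, rfl⟩ := hP z hz
  rw [key i m j n, key (i + j) (m + n) k p, key j n k p, key i m (j + k) (n + p),
    add_assoc, add_assoc]
end
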